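/- arXiv:2503.11809 — 3 statements merged into one kernel-verified Lean document; each statement's English description precedes it below -/
import Mathlib

section
/- Let U_j, S_j, A_j (j ∈ ℕ) be nonnegative real sequences with S_j → 0 and A_j → 0, and let ε ∈ (0,1). Define Δ_j = (U_j - A_j)² - εU_j(U_j + S_j). Suppose for every j, either A_j ≥ U_j or Δ_j < 0. Then U_j → 0. -/
/-- Inner-loop non-termination lemma: if S_j → 0, A_j → 0, and for every j
either A_j ≥ U_j or Δ_j = (U_j-A_j)² - εU_j(U_j+S_j) < 0, then U_j → 0. -/
theorem stmt6 (U S A : ℕ → ℝ) (ε : ℝ) (hε0 : 0 < ε) (hε1 : ε < 1)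
    (hU : ∀ j, 0 ≤ U j) (hS : ∀ j, 0 ≤ S j) (hA : ∀ j, 0 ≤ A j)
    (hStend : Filter.Tendsto S Filter.atTop (nhds 0))
    (hAtend : Filter.Tendsto A Filter.atTop (nhds 0))
    (hfail : ∀ j, U j ≤ A j ∨ (U j - A j)^2 - ε * U j * (U j + S j) < 0) :
    Filter.Tendsto U Filter.atTop (nhds 0) := by
  have h1ε : (0:ℝ) < 1 - ε := by linarith
  have hbound : ∀ j, U j ≤ (2 * A j + ε * S j) / (1 - ε) := by
    intro j
    rw [le_div_iff₀ h1ε]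
    rcases hfail j with h | h
    · nlinarith [hA j, hS j, hU j]
    · rcases eq_or_lt_of_le (hU j) with h0 | h0
      · nlinarith [hA j, hS j]
      · nlinarith [sq_nonneg (A j), hS j, hA j, mul_pos h0 h0]
  have htend : Filter.Tendsto (fun j => (2 * A j + ε * S j) / (1 - ε))
      Filter.atTop (nhds 0) := by
    have : Filter.Tendsto (fun j => (2 * A j + ε * S j)) Filter.atTop (nhds 0) := by
      have := (hAtend.const_mul 2).add (hStend.const_mul ε)
      simpa using this
    simpa using this.div_const (1 - ε)
  exact squeeze_zero hU hbound htend
end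

section
/- Let H be a real Hilbert space, ε ∈ (0,1), and suppose real sequences and vectors satisfy, for each k: ρ_k > 0, c_k > 0, p^{k+1} = p^k - ρ_k c_k u^{k+1}, w^{k+1} = w^k - ρ_k c_k s^{k+1}, the monotonicity inequality ⟨x^{k+1} - x*, s^{k+1}⟩ + ⟨p̄^k - p*, u^{k+1}⟩ ≥ 0 with p̄^k = p^k - c_k u^{k+1}, and the error criterion (2ρ_k/c_k)|⟨x^{k+1} - w^k, s^{k+1}⟩| + ρ_k²‖s^{k+1}‖² ≤ (2ρ_k - ρ_k² - ε)‖u^{k+1}‖². Then ‖p^{k+1} - p*‖² + ‖w^{k+1} - x*‖² ≤ ‖p^k - p*‖² + ‖w^k - x*‖² - ε c_k² ‖u^{k+1}‖². -/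
open scoped RealInnerProductSpace

/-- Lemma 1 of the paper (one-step Fejér contraction inequality) in a real
Hilbert space setting, with the saddle-point monotonicity condition
abstracted as a hypothesis. -/
theorem stmt9 {H G : Type*}
    [NormedAddCommGroup H] [InnerProductSpace ℝ H] [CompleteSpace H]
    [NormedAddCommGroup G] [InnerProductSpace ℝ G] [CompleteSpace G]
    (ε ρ c : ℝ) (hε0 : 0 < ε) (hε1 : ε < 1) (hρ : 0 < ρ) (hc : 0 < c)
    (x1 w w1 xstar s1 : H) (p p1 pbar pstar u1 : G)
    (hp1 : p1 = p - (ρ * c) • u1)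
    (hw1 : w1 = w - (ρ * c) • s1)
    (hpbar : pbar = p - c • u1)
    (hmono : 0 ≤ ⟪x1 - xstar, s1⟫ + ⟪pbar - pstar, u1⟫)
    (herr : (2*ρ/c) * |⟪x1 - w, s1⟫| + ρ^2 * ‖s1‖^2 ≤ (2*ρ - ρ^2 - ε) * ‖u1‖^2) :
    ‖p1 - pstar‖^2 + ‖w1 - xstar‖^2 ≤
      ‖p - pstar‖^2 + ‖w - xstar‖^2 - ε * c^2 * ‖u1‖^2 := by
  have hrc : (0:ℝ) < ρ * c := mul_pos hρ hc
  have e1 : ‖p1 - pstar‖^2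
      = ‖p - pstar‖^2 - 2*(ρ*c)*⟪p - pstar, u1⟫ + (ρ*c)^2*‖u1‖^2 := by
    have h : p1 - pstar = (p - pstar) - (ρ*c) • u1 := by rw [hp1]; abel
    rw [h, norm_sub_sq_real, real_inner_smul_right, norm_smul,
      Real.norm_eq_abs, abs_of_pos hrc]
    ring
  have e2 : ‖w1 - xstar‖^2
      = ‖w - xstar‖^2 - 2*(ρ*c)*⟪w - xstar, s1⟫ + (ρ*c)^2*‖s1‖^2 := by
    have h : w1 - xstar = (w - xstar) - (ρ*c) • s1 := by rw [hw1]; abel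
    rw [h, norm_sub_sq_real, real_inner_smul_right, norm_smul,
      Real.norm_eq_abs, abs_of_pos hrc]
    ring
  have ex : ⟪x1 - xstar, s1⟫ = ⟪x1 - w, s1⟫ + ⟪w - xstar, s1⟫ := by
    rw [← inner_add_left]; congr 1; abel
  have ep : ⟪pbar - pstar, u1⟫ = ⟪p - pstar, u1⟫ - c * ‖u1‖^2 := by
    have h : pbar - pstar = (p - pstar) - c • u1 := by rw [hpbar]; abel
    rw [h, inner_sub_left, real_inner_smul_left, real_inner_self_eq_norm_sq]
  rw [ex, ep] at hmono
  rw [e1, e2]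
  have hC : ⟪x1 - w, s1⟫ ≤ |⟪x1 - w, s1⟫| := le_abs_self _
  have herr' : 2*ρ*c*|⟪x1 - w, s1⟫| + ρ^2*c^2*‖s1‖^2
      ≤ (2*ρ - ρ^2 - ε) * c^2 * ‖u1‖^2 := by
    have := mul_le_mul_of_nonneg_left herr (le_of_lt (mul_pos hc hc))
    have hcne : c ≠ 0 := ne_of_gt hc
    calc 2*ρ*c*|⟪x1 - w, s1⟫| + ρ^2*c^2*‖s1‖^2
        = c * c * ((2*ρ/c) * |⟪x1 - w, s1⟫| + ρ^2 * ‖s1‖^2) := by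
          field_simp
      _ ≤ c * c * ((2*ρ - ρ^2 - ε) * ‖u1‖^2) := this
      _ = (2*ρ - ρ^2 - ε) * c^2 * ‖u1‖^2 := by ring
  nlinarith [hmono, herr', hC, mul_pos hρ hc, sq_nonneg (‖u1‖), sq_nonneg c]
end

section
/- Let f : ℝⁿ → ℝ ∪ {+∞} be closed proper convex, M an m×n matrix, p ∈ ℝᵐ, c > 0, and define h(q) = f*(-Mᵀq) + (1/(2c))‖q - p‖² and f_c(z) = h*(-z). Suppose x̄ minimizes x ↦ f(x) + ⟨p, Mx⟩ + (c/2)‖Mx - z‖² over ℝⁿ. Then f_c is differentiable at z with ∇f_c(z) = -(p + c(Mx̄ - z)). -/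
open scoped RealInnerProductSpace

/-- The convex (Fenchel) conjugate of an extended-real-valued function. -/
noncomputable def econj {E : Type*} [NormedAddCommGroup E] [InnerProductSpace ℝ E]
    (f : E → EReal) (y : E) : EReal :=
  ⨆ x : E, (((⟪y, x⟫ : ℝ) : EReal) - f x)

/-- An extended-real-valued function is closed (lsc), proper, and convex. -/
def ERealProperConvexLsc {E : Type*} [AddCommGroup E] [Module ℝ E] [TopologicalSpace E]
    (f : E → EReal) : Prop :=
  (∃ x, f x ≠ ⊤) ∧ (∀ x, f x ≠ ⊥) ∧
  (∀ x y : E, ∀ a b : ℝ, 0 ≤ a → 0 ≤ b → a + b = 1 →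
    f (a • x + b • y) ≤ (a : EReal) * f x + (b : EReal) * f y) ∧
  LowerSemicontinuous f

lemma le_econj {E : Type*} [NormedAddCommGroup E] [InnerProductSpace ℝ E]
    (f : E → EReal) (y x : E) : (((⟪y, x⟫ : ℝ) : EReal) - f x) ≤ econj f y :=
  le_iSup (fun x => (((⟪y, x⟫ : ℝ) : EReal) - f x)) x

lemma econj_le {E : Type*} [NormedAddCommGroup E] [InnerProductSpace ℝ E]
    (f : E → EReal) (y : E) (b : EReal)
    (h : ∀ x, (((⟪y, x⟫ : ℝ) : EReal) - f x) ≤ b) : econj f y ≤ b :=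
  iSup_le h

set_option maxHeartbeats 1000000

/-- Gradient formula for the dual subproblem function (Lemma 3 of the paper):
with h(q) = f*(-Mᵀq) + (1/(2c))‖q - p‖² and f_c(z) = h*(-z), if x̄ minimizes
x ↦ f(x) + ⟨p, Mx⟩ + (c/2)‖Mx - z‖², then f_c is real-valued and
differentiable at z with ∇f_c(z) = -(p + c(Mx̄ - z)). -/

theorem stmt16 (n m : ℕ)
    (f : EuclideanSpace ℝ (Fin n) → EReal) (hf : ERealProperConvexLsc f)
    (M : EuclideanSpace ℝ (Fin n) →ₗ[ℝ] EuclideanSpace ℝ (Fin m))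
    (Mt : EuclideanSpace ℝ (Fin m) →ₗ[ℝ] EuclideanSpace ℝ (Fin n))
    (hadj : ∀ x q, ⟪M x, q⟫ = ⟪x, Mt q⟫)
    (p z : EuclideanSpace ℝ (Fin m)) (c : ℝ) (hc : 0 < c)
    (xbar : EuclideanSpace ℝ (Fin n))
    (hmin : ∀ x, f xbar + ((⟪p, M xbar⟫ + c/2 * ‖M xbar - z‖^2 : ℝ) : EReal)
              ≤ f x + ((⟪p, M x⟫ + c/2 * ‖M x - z‖^2 : ℝ) : EReal)) :
    ∃ φ : EuclideanSpace ℝ (Fin m) → ℝ,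
      (∀ y, econj (fun q => econj f (-(Mt q)) + ((1/(2*c) * ‖q - p‖^2 : ℝ) : EReal)) (-y)
              = ((φ y : ℝ) : EReal)) ∧
      HasGradientAt φ (-(p + c • (M xbar - z))) z := by
  classical
  obtain ⟨⟨x₀, hx₀⟩, hbot, hconv, -⟩ := hf
  set qb : EuclideanSpace ℝ (Fin m) := p + c • (M xbar - z) with hqb
  -- f xbar is real
  have hfx_ne_top : f xbar ≠ ⊤ := by
    intro h
    obtain ⟨B₀, hB₀⟩ : ∃ B₀ : ℝ, f x₀ = (B₀ : EReal) :=
      ⟨(f x₀).toReal, (EReal.coe_toReal hx₀ (hbot x₀)).symm⟩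
    have h2 := hmin x₀
    rw [h, hB₀, EReal.top_add_coe, ← EReal.coe_add] at h2
    exact (EReal.coe_ne_top _) (top_le_iff.mp h2)
  set A : ℝ := (f xbar).toReal with hA
  have hfxA : f xbar = (A : EReal) := (EReal.coe_toReal hfx_ne_top (hbot xbar)).symm
  -- Step 1: first-order optimality condition
  have step1 : ∀ x : EuclideanSpace ℝ (Fin n), ∀ B : ℝ, f x = (B : EReal) →
      A ≤ B + ⟪qb, M x - M xbar⟫ := by
    intro x B hB
    set K := ‖M x - M xbar‖^2 with hKdef
    have hK0 : (0:ℝ) ≤ K := sq_nonneg _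
    have key : ∀ t : ℝ, 0 < t → t ≤ 1 → A ≤ B + ⟪qb, M x - M xbar⟫ + c*t/2*K := by
      intro t ht ht1
      have hcv := hconv xbar x (1-t) t (by linarith) ht.le (by ring)
      set xt := (1-t) • xbar + t • x with hxt
      rw [hfxA, hB, ← EReal.coe_mul, ← EReal.coe_mul, ← EReal.coe_add] at hcv
      have hxt_top : f xt ≠ ⊤ := by
        intro h; rw [h] at hcv; exact (EReal.coe_ne_top _) (top_le_iff.mp hcv)
      obtain ⟨C, hC⟩ : ∃ C : ℝ, f xt = (C : EReal) :=
        ⟨(f xt).toReal, (EReal.coe_toReal hxt_top (hbot xt)).symm⟩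
      rw [hC, EReal.coe_le_coe_iff] at hcv
      have hmin' := hmin xt
      rw [hfxA, hC, ← EReal.coe_add, ← EReal.coe_add, EReal.coe_le_coe_iff] at hmin'
      have hMxt : M xt = M xbar + t • (M x - M xbar) := by
        rw [hxt]; simp only [map_add, map_smul]; module
      have e1 : ⟪p, M xt⟫ = ⟪p, M xbar⟫ + t * ⟪p, M x - M xbar⟫ := by
        rw [hMxt, inner_add_right, real_inner_smul_right]
      have e2 : ‖M xt - z‖^2
          = ‖M xbar - z‖^2 + 2*(t*⟪M xbar - z, M x - M xbar⟫) + t^2*K := by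
        have h5 : M xt - z = (M xbar - z) + t • (M x - M xbar) := by rw [hMxt]; abel
        rw [h5, norm_add_sq_real, real_inner_smul_right, norm_smul, Real.norm_eq_abs, hKdef,
          mul_pow, sq_abs]
      have e3 : (⟪qb, M x - M xbar⟫ : ℝ)
          = ⟪p, M x - M xbar⟫ + c * ⟪M xbar - z, M x - M xbar⟫ := by
        rw [hqb, inner_add_left, real_inner_smul_left]
      rw [e1, e2] at hmin'
      have h4 : t * A ≤ t * (B + ⟪qb, M x - M xbar⟫ + c*t/2*K) := by
        rw [e3]; nlinarith [hmin', hcv]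
      exact le_of_mul_le_mul_left h4 ht
    -- let t → 0
    have hε : ∀ ε : ℝ, 0 < ε → A ≤ B + ⟪qb, M x - M xbar⟫ + ε := by
      intro ε hε
      have hden : (0:ℝ) < c*(K+1) := by positivity
      set t := min 1 (2*ε/(c*(K+1))) with htdef
      have ht0 : 0 < t := lt_min one_pos (by positivity)
      have h2 : t * (c*(K+1)) ≤ 2*ε := by
        calc t * (c*(K+1)) ≤ 2*ε/(c*(K+1)) * (c*(K+1)) :=
              mul_le_mul_of_nonneg_right (min_le_right _ _) hden.le
          _ = 2*ε := by field_simp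
      have h1 := key t ht0 (min_le_left _ _)
      have h3 : c*t/2*K ≤ ε := by nlinarith [mul_nonneg hc.le ht0.le]
      linarith
    exact le_of_forall_pos_le_add hε
  -- adjoint computation
  have hinner_neg : ∀ (q : EuclideanSpace ℝ (Fin m)) (x : EuclideanSpace ℝ (Fin n)),
      (⟪-(Mt q), x⟫ : ℝ) = -⟪q, M x⟫ := by
    intro q x
    rw [inner_neg_left, real_inner_comm, ← hadj, real_inner_comm]
  -- Step 2: value of the conjugate of f at -Mᵀ qb
  have step2 : econj f (-(Mt qb)) = ((-⟪qb, M xbar⟫ - A : ℝ) : EReal) := by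
    apply le_antisymm
    · apply econj_le
      intro x
      by_cases hx : f x = ⊤
      · rw [hx, EReal.sub_top _]
        exact bot_le
      · obtain ⟨B, hB⟩ : ∃ B : ℝ, f x = (B : EReal) :=
          ⟨(f x).toReal, (EReal.coe_toReal hx (hbot x)).symm⟩
        rw [hB, hinner_neg, ← EReal.coe_sub, EReal.coe_le_coe_iff]
        have h1 := step1 x B hB
        have hs : (⟪qb, M x - M xbar⟫ : ℝ) = ⟪qb, M x⟫ - ⟪qb, M xbar⟫ :=
          inner_sub_right _ _ _
        rw [hs] at h1
        linarith
    · have h := le_econj f (-(Mt qb)) xbar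
      rwa [hfxA, hinner_neg, ← EReal.coe_sub] at h
  -- the dual function h
  set hfun : EuclideanSpace ℝ (Fin m) → EReal :=
    fun q => econj f (-(Mt q)) + ((1/(2*c) * ‖q - p‖^2 : ℝ) : EReal) with hhfun
  -- lower bound
  have hlow : ∀ y, ((A + ⟪qb, M xbar - y⟫ - c/2*‖M xbar - z‖^2 : ℝ) : EReal)
      ≤ econj hfun (-y) := by
    intro y
    refine le_trans ?_ (le_econj hfun (-y) qb)
    have hq : hfun qb = ((-⟪qb, M xbar⟫ - A + c/2*‖M xbar - z‖^2 : ℝ) : EReal) := by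
      rw [hhfun]
      simp only
      rw [step2, ← EReal.coe_add]
      congr 1
      have h5 : qb - p = c • (M xbar - z) := by rw [hqb]; abel
      rw [h5, norm_smul, Real.norm_eq_abs, mul_pow, sq_abs]
      field_simp
    rw [hq, ← EReal.coe_sub, EReal.coe_le_coe_iff]
    have h1 : (⟪-y, qb⟫ : ℝ) = -⟪qb, y⟫ := by rw [inner_neg_left, real_inner_comm]
    have h2 : (⟪qb, M xbar - y⟫ : ℝ) = ⟪qb, M xbar⟫ - ⟪qb, y⟫ := inner_sub_right _ _ _
    linarith
  -- upper bound (weak duality)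
  have hup : ∀ y, econj hfun (-y)
      ≤ ((A + ⟪p, M xbar - y⟫ + c/2*‖M xbar - y‖^2 : ℝ) : EReal) := by
    intro y
    apply econj_le
    intro q
    have hlb : ((-⟪q, M xbar⟫ - A : ℝ) : EReal) ≤ econj f (-(Mt q)) := by
      have h := le_econj f (-(Mt q)) xbar
      rwa [hfxA, hinner_neg, ← EReal.coe_sub] at h
    by_cases htop : econj f (-(Mt q)) = ⊤
    · have h6 : hfun q = ⊤ := by rw [hhfun]; simp only; rw [htop, EReal.top_add_coe]
      rw [h6, EReal.sub_top _]
      exact bot_le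
    · have hnbot : econj f (-(Mt q)) ≠ ⊥ := by
        intro h; rw [h] at hlb; exact (EReal.coe_ne_bot _) (le_bot_iff.mp hlb)
      obtain ⟨E, hE⟩ : ∃ e : ℝ, econj f (-(Mt q)) = (e : EReal) :=
        ⟨_, (EReal.coe_toReal htop hnbot).symm⟩
      rw [hE, EReal.coe_le_coe_iff] at hlb
      have h6 : hfun q = ((E + 1/(2*c)*‖q - p‖^2 : ℝ) : EReal) := by
        rw [hhfun]; simp only; rw [hE, ← EReal.coe_add]
      rw [h6, ← EReal.coe_sub, EReal.coe_le_coe_iff]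
      have hip : (⟪-y, q⟫ : ℝ) = -⟪q, y⟫ := by rw [inner_neg_left, real_inner_comm]
      have h1 : (⟪q, M xbar - y⟫ : ℝ) = ⟪q, M xbar⟫ - ⟪q, y⟫ := inner_sub_right _ _ _
      have h2 : (⟪q - p, M xbar - y⟫ : ℝ) = ⟪q, M xbar - y⟫ - ⟪p, M xbar - y⟫ :=
        inner_sub_left _ _ _
      have h3 : (⟪q - p, M xbar - y⟫ : ℝ) ≤ 1/(2*c)*‖q - p‖^2 + c/2*‖M xbar - y‖^2 := by
        have h4 := real_inner_le_norm (q - p) (M xbar - y)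
        have h5 : (2*c) * (‖q - p‖ * ‖M xbar - y‖) ≤ ‖q - p‖^2 + c^2*‖M xbar - y‖^2 := by
          nlinarith [sq_nonneg (‖q - p‖ - c*‖M xbar - y‖)]
        rw [div_mul_eq_mul_div, div_add' _ _ _ (by positivity : (2*c) ≠ 0), le_div_iff₀ (by positivity : (0:ℝ) < 2*c)]
        nlinarith
      linarith
  -- definition of φ and its bounds
  set φ : EuclideanSpace ℝ (Fin m) → ℝ := fun y => (econj hfun (-y)).toReal with hφdef
  have hφ : ∀ y, econj hfun (-y) = ((φ y : ℝ) : EReal) := by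
    intro y
    have h1 := hlow y
    have h2 := hup y
    have hne_top : econj hfun (-y) ≠ ⊤ := by
      intro h; rw [h] at h2; exact (EReal.coe_ne_top _) (top_le_iff.mp h2)
    have hne_bot : econj hfun (-y) ≠ ⊥ := by
      intro h; rw [h] at h1; exact (EReal.coe_ne_bot _) (le_bot_iff.mp h1)
    exact (EReal.coe_toReal hne_top hne_bot).symm
  have hlo' : ∀ y, A + ⟪qb, M xbar - y⟫ - c/2*‖M xbar - z‖^2 ≤ φ y := by
    intro y
    have h1 := hlow y
    rw [hφ y, EReal.coe_le_coe_iff] at h1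
    exact h1
  have hup' : ∀ y, φ y ≤ A + ⟪p, M xbar - y⟫ + c/2*‖M xbar - y‖^2 := by
    intro y
    have h1 := hup y
    rw [hφ y, EReal.coe_le_coe_iff] at h1
    exact h1
  -- identity for ⟪qb, M xbar - z⟫
  have id1 : (⟪qb, M xbar - z⟫ : ℝ) = ⟪p, M xbar - z⟫ + c*‖M xbar - z‖^2 := by
    rw [hqb, inner_add_left, real_inner_smul_left, real_inner_self_eq_norm_sq]
  have hφz : φ z = A + ⟪p, M xbar - z⟫ + c/2*‖M xbar - z‖^2 := by
    have h1 := hlo' z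
    have h2 := hup' z
    rw [id1] at h1
    linarith
  -- sandwich bounds around z
  have hbnd : ∀ y, 0 ≤ φ y - φ z - ⟪-qb, y - z⟫ ∧
      φ y - φ z - ⟪-qb, y - z⟫ ≤ c/2*‖y - z‖^2 := by
    intro y
    have hgy : (⟪-qb, y - z⟫ : ℝ) = ⟪qb, z⟫ - ⟪qb, y⟫ := by
      rw [inner_neg_left, inner_sub_right]; ring
    have e_a : (⟪qb, M xbar - y⟫ : ℝ) = ⟪qb, M xbar⟫ - ⟪qb, y⟫ := inner_sub_right _ _ _
    have e_b : (⟪qb, M xbar - z⟫ : ℝ) = ⟪qb, M xbar⟫ - ⟪qb, z⟫ := inner_sub_right _ _ _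
    constructor
    · have h1 := hlo' y
      rw [e_a] at h1
      rw [hgy, hφz]
      rw [e_b] at id1
      linarith
    · have h1 := hup' y
      have hMy : M xbar - y = (M xbar - z) + (z - y) := by abel
      rw [hMy, norm_add_sq_real, inner_add_right] at h1
      have e_c : (⟪p, z - y⟫ : ℝ) = ⟪p, z⟫ - ⟪p, y⟫ := inner_sub_right _ _ _
      have e_d : (⟪qb, z - y⟫ : ℝ) = ⟪p, z - y⟫ + c*⟪M xbar - z, z - y⟫ := by
        rw [hqb, inner_add_left, real_inner_smul_left]
      have e_e : (⟪qb, z - y⟫ : ℝ) = ⟪qb, z⟫ - ⟪qb, y⟫ := inner_sub_right _ _ _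
      have e_f : ‖z - y‖ = ‖y - z‖ := norm_sub_rev _ _
      rw [e_f] at h1
      rw [hgy, hφz]
      linarith
  -- conclude
  refine ⟨φ, hφ, ?_⟩
  rw [hasGradientAt_iff_isLittleO, Asymptotics.isLittleO_iff]
  intro ε hε
  rw [Metric.eventually_nhds_iff]
  refine ⟨2*ε/c, by positivity, fun y hy => ?_⟩
  rw [dist_eq_norm, lt_div_iff₀ hc] at hy
  obtain ⟨hb1, hb2⟩ := hbnd y
  have hn : (0:ℝ) ≤ ‖y - z‖ := norm_nonneg _
  rw [Real.norm_eq_abs, abs_of_nonneg hb1]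
  nlinarith [mul_nonneg (by nlinarith : (0:ℝ) ≤ 2*ε - ‖y - z‖*c) hn]
end
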